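/- There exists a constant c' > 0 such that for every bounded Lipschitz continuous function w_0 : ℝ → ℝ with Lipschitz constant K, the function u(x, t) = ∫_ℝ E(x − y, t) w_0(y) dy satisfies |∂_t u(x, t)| ≤ c' K t^{−1/2} for all x ∈ ℝ and all t > 0. -/

import Mathlib

/-!
Differentiating under the integral sign, `∂ₜu(x,t) = ∫ ∂ₜE(x−y,t) w₀(y) dy`. Since `∫ E(·,s) = 1`
for every `s > 0`, the kernel `∂ₜE(·,t)` has mean zero, so `w₀(y)` may be replaced by
`w₀(y) − w₀(x)`, which is at most `K|x−y|` in absolute value. It remains to integrate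
`|∂ₜE(z,t)| |z| ≤ E(z,t) (|z|/(2t) + |z|³/(4t²))`; the absolute Gaussian moments give exactly
`3/√(πt)`, so `c' = 3/√π`.
-/

open MeasureTheory

/-- The Gauss kernel `E(x,t) = (4πt)^{−1/2} e^{−x²/(4t)}`. -/
noncomputable def gaussE (x t : ℝ) : ℝ :=
  (4 * Real.pi * t) ^ (-(1 : ℝ) / 2) * Real.exp (-x ^ 2 / (4 * t))

open Real

theorem integrable_pow_mul_exp_neg_mul_sq {b : ℝ} (hb : 0 < b) (n : ℕ) :
    Integrable fun x : ℝ => x ^ n * exp (-b * x ^ 2) := by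
  simpa only [rpow_natCast] using
    integrable_rpow_mul_exp_neg_mul_sq hb (s := n) (by linarith [n.cast_nonneg (α := ℝ)])

theorem integrable_abs_pow_mul_exp_neg_mul_sq {b : ℝ} (hb : 0 < b) (n : ℕ) :
    Integrable fun x : ℝ => |x| ^ n * exp (-b * x ^ 2) := by
  simpa only [norm_mul, norm_pow, norm_eq_abs, abs_exp] using
    (integrable_pow_mul_exp_neg_mul_sq hb n).norm

theorem integral_abs_pow_mul_exp_neg_mul_sq {b : ℝ} (hb : 0 < b) (n : ℕ) :
    ∫ x : ℝ, |x| ^ n * exp (-b * x ^ 2) =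
      b ^ (-((n : ℝ) + 1) / 2) * Gamma (((n : ℝ) + 1) / 2) := by
  have h := integral_rpow_mul_exp_neg_mul_rpow two_pos (q := n)
    (by linarith [n.cast_nonneg (α := ℝ)]) hb
  simp only [rpow_natCast, rpow_ofNat] at h
  have habs : (fun x : ℝ => |x| ^ n * exp (-b * x ^ 2)) =
      fun x => |x| ^ n * exp (-b * |x| ^ 2) := by simp only [sq_abs]
  rw [habs, integral_comp_abs (f := fun x => x ^ n * exp (-b * x ^ 2)), h]
  ring

theorem gaussE_eq_mul_exp (z t : ℝ) :
    gaussE z t = (4 * π * t) ^ (-(1 : ℝ) / 2) * exp (-(1 / (4 * t)) * z ^ 2) := by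
  unfold gaussE
  congr 2
  ring

theorem gaussE_pos {t : ℝ} (ht : 0 < t) (z : ℝ) : 0 < gaussE z t := by
  unfold gaussE
  positivity

theorem integrable_gaussE {t : ℝ} (ht : 0 < t) : Integrable fun z => gaussE z t := by
  simp_rw [gaussE_eq_mul_exp]
  exact (integrable_exp_neg_mul_sq (by positivity)).const_mul _

theorem integral_gaussE {t : ℝ} (ht : 0 < t) : ∫ z, gaussE z t = 1 := by
  simp_rw [gaussE_eq_mul_exp]
  rw [integral_const_mul, integral_gaussian, show π / (1 / (4 * t)) = 4 * π * t by field_simp,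
    sqrt_eq_rpow, ← rpow_add (by positivity)]
  norm_num

noncomputable def gaussEDeriv (z t : ℝ) : ℝ :=
  gaussE z t * (z ^ 2 / (4 * t ^ 2) - 1 / (2 * t))

theorem hasDerivAt_gaussE (z : ℝ) {t : ℝ} (ht : 0 < t) :
    HasDerivAt (gaussE z) (gaussEDeriv z t) t := by
  have hπt : 0 < 4 * π * t := by positivity
  have hpow : HasDerivAt (fun s => (4 * π * s) ^ (-(1 : ℝ) / 2))
      (4 * π * (-(1 : ℝ) / 2) * (4 * π * t) ^ (-(1 : ℝ) / 2 - 1)) t :=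
    ((hasDerivAt_id t).const_mul (4 * π)).rpow_const (Or.inl hπt.ne') |>.congr_deriv (by simp)
  have hexp : HasDerivAt (fun s => exp (-z ^ 2 / (4 * s)))
      (exp (-z ^ 2 / (4 * t)) * (z ^ 2 / (4 * t ^ 2))) t := by
    refine HasDerivAt.exp ?_
    have h := (hasDerivAt_inv ht.ne').const_mul (-z ^ 2 / 4)
    rw [show (fun s => -z ^ 2 / 4 * s⁻¹) = fun s => -z ^ 2 / (4 * s) by funext s; ring] at h
    exact h.congr_deriv (by ring)
  refine (hpow.mul hexp).congr_deriv ?_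
  rw [gaussEDeriv, gaussE, sub_eq_add_neg (-(1 : ℝ) / 2), rpow_add hπt, rpow_neg_one]
  field_simp
  ring

theorem abs_gaussEDeriv_le {t : ℝ} (ht : 0 < t) (z : ℝ) :
    |gaussEDeriv z t| ≤ gaussE z t * (1 / (2 * t) + z ^ 2 / (4 * t ^ 2)) := by
  rw [gaussEDeriv, abs_mul, abs_of_pos (gaussE_pos ht z)]
  refine mul_le_mul_of_nonneg_left ?_ (gaussE_pos ht z).le
  have : 0 ≤ z ^ 2 / (4 * t ^ 2) := by positivity
  have : 0 ≤ 1 / (2 * t) := by positivity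
  exact abs_le.2 ⟨by linarith, by linarith⟩

noncomputable def gaussEDerivBound (z t : ℝ) : ℝ :=
  (2 * π * t) ^ (-(1 : ℝ) / 2) * (1 / t + z ^ 2 / t ^ 2) * exp (-(1 / (6 * t)) * z ^ 2)

theorem integrable_gaussEDerivBound {t : ℝ} (ht : 0 < t) :
    Integrable fun z => gaussEDerivBound z t := by
  have hb : 0 < 1 / (6 * t) := by positivity
  refine (((integrable_exp_neg_mul_sq hb).const_mul ((2 * π * t) ^ (-(1 : ℝ) / 2) / t)).add
    ((integrable_pow_mul_exp_neg_mul_sq hb 2).const_mul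
      ((2 * π * t) ^ (-(1 : ℝ) / 2) / t ^ 2))).congr (ae_of_all _ fun z => ?_)
  simp only [Pi.add_apply, gaussEDerivBound]
  ring

theorem abs_gaussEDeriv_le_gaussEDerivBound {t s : ℝ} (ht : 0 < t)
    (hs : s ∈ Metric.ball t (t / 2)) (z : ℝ) : |gaussEDeriv z s| ≤ gaussEDerivBound z t := by
  obtain ⟨hs₁, hs₂⟩ := abs_lt.1 (Metric.mem_ball.1 hs)
  have hs₀ : 0 < s := by linarith
  have hnorm : (4 * π * s) ^ (-(1 : ℝ) / 2) ≤ (2 * π * t) ^ (-(1 : ℝ) / 2) :=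
    rpow_le_rpow_of_nonpos (by positivity) (by nlinarith [pi_pos]) (by norm_num)
  have hexp : exp (-(1 / (4 * s)) * z ^ 2) ≤ exp (-(1 / (6 * t)) * z ^ 2) := by
    refine exp_le_exp.2 (mul_le_mul_of_nonneg_right (neg_le_neg ?_) (sq_nonneg z))
    exact one_div_le_one_div_of_le (by positivity) (by linarith)
  have hpoly : 1 / (2 * s) + z ^ 2 / (4 * s ^ 2) ≤ 1 / t + z ^ 2 / t ^ 2 :=
    add_le_add (one_div_le_one_div_of_le ht (by linarith))
      (div_le_div_of_nonneg_left (sq_nonneg z) (by positivity) (by nlinarith))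
  calc |gaussEDeriv z s|
      ≤ (4 * π * s) ^ (-(1 : ℝ) / 2) * exp (-(1 / (4 * s)) * z ^ 2) *
          (1 / (2 * s) + z ^ 2 / (4 * s ^ 2)) := by
        rw [← gaussE_eq_mul_exp]
        exact abs_gaussEDeriv_le hs₀ z
    _ ≤ (2 * π * t) ^ (-(1 : ℝ) / 2) * exp (-(1 / (6 * t)) * z ^ 2) *
          (1 / t + z ^ 2 / t ^ 2) := by
        gcongr
    _ = gaussEDerivBound z t := by
        rw [gaussEDerivBound]
        ring

theorem integrable_gaussEDeriv {t : ℝ} (ht : 0 < t) : Integrable fun z => gaussEDeriv z t := by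
  refine (integrable_gaussEDerivBound ht).mono' ?_ (ae_of_all _ fun z => ?_)
  · have hcont : Continuous fun z => gaussEDeriv z t := by
      unfold gaussEDeriv gaussE
      fun_prop
    exact hcont.aestronglyMeasurable
  · exact abs_gaussEDeriv_le_gaussEDerivBound ht (Metric.mem_ball_self (by positivity)) z

theorem hasDerivAt_integral_gaussE_mul {g : ℝ → ℝ} (hg : AEStronglyMeasurable g) {M : ℝ}
    (hM : ∀ z, |g z| ≤ M) {t : ℝ} (ht : 0 < t) :
    HasDerivAt (fun s => ∫ z, gaussE z s * g z) (∫ z, gaussEDeriv z t * g z) t := by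
  have hgE : ∀ s, Continuous fun z => gaussE z s := fun s => by unfold gaussE; fun_prop
  have hball : Metric.ball t (t / 2) ∈ nhds t := Metric.ball_mem_nhds t (by positivity)
  refine (hasDerivAt_integral_of_dominated_loc_of_deriv_le (F := fun s z => gaussE z s * g z)
    (F' := fun s z => gaussEDeriv z s * g z) (bound := fun z => gaussEDerivBound z t * M) hball
    (.of_forall fun s => (hgE s).aestronglyMeasurable.mul hg) ?_
    ((integrable_gaussEDeriv ht).aestronglyMeasurable.mul hg)
    (.of_forall fun z s hs => ?_) ((integrable_gaussEDerivBound ht).mul_const M)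
    (.of_forall fun z s hs => ?_)).2
  · exact (integrable_gaussE ht).mul_bdd hg (.of_forall hM)
  · rw [norm_mul, norm_eq_abs, norm_eq_abs]
    exact mul_le_mul (abs_gaussEDeriv_le_gaussEDerivBound ht hs z) (hM z) (abs_nonneg _)
      ((abs_nonneg _).trans (abs_gaussEDeriv_le_gaussEDerivBound ht hs z))
  · obtain ⟨hs₁, -⟩ := abs_lt.1 (Metric.mem_ball.1 hs)
    exact (hasDerivAt_gaussE z (by linarith)).mul_const (g z)

theorem integral_gaussEDeriv {t : ℝ} (ht : 0 < t) : ∫ z, gaussEDeriv z t = 0 := by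
  have hderiv := hasDerivAt_integral_gaussE_mul (g := fun _ => 1) aestronglyMeasurable_const
    (M := 1) (by simp) ht
  simp only [mul_one] at hderiv
  refine hderiv.unique ((hasDerivAt_const t (1 : ℝ)).congr_of_eventuallyEq ?_)
  filter_upwards [eventually_gt_nhds ht] with s hs using integral_gaussE hs

theorem integrable_gaussE_mul_abs_pow {t : ℝ} (ht : 0 < t) (n : ℕ) :
    Integrable fun z => gaussE z t * |z| ^ n := by
  refine ((integrable_abs_pow_mul_exp_neg_mul_sq (b := 1 / (4 * t)) (by positivity) n).const_mul
    ((4 * π * t) ^ (-(1 : ℝ) / 2))).congr (ae_of_all _ fun z => ?_)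
  simp only [gaussE_eq_mul_exp]
  ring

theorem integral_gaussE_mul_abs_pow {t : ℝ} (ht : 0 < t) (n : ℕ) :
    ∫ z, gaussE z t * |z| ^ n = (4 * π * t) ^ (-(1 : ℝ) / 2) *
      (4 * t) ^ (((n : ℝ) + 1) / 2) * Gamma (((n : ℝ) + 1) / 2) := by
  have hb : (1 / (4 * t)) ^ (-((n : ℝ) + 1) / 2) = (4 * t) ^ (((n : ℝ) + 1) / 2) := by
    rw [one_div, inv_rpow (by positivity), ← rpow_neg (by positivity), neg_div, neg_neg]
  have hfun : (fun z => gaussE z t * |z| ^ n) = fun z =>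
      (4 * π * t) ^ (-(1 : ℝ) / 2) * (|z| ^ n * exp (-(1 / (4 * t)) * z ^ 2)) := by
    funext z
    rw [gaussE_eq_mul_exp]
    ring
  rw [hfun, integral_const_mul, integral_abs_pow_mul_exp_neg_mul_sq (by positivity), hb]
  ring

theorem integrable_gaussE_mul_moments {t : ℝ} (ht : 0 < t) :
    Integrable fun z => gaussE z t * (|z| / (2 * t) + |z| ^ 3 / (4 * t ^ 2)) := by
  refine (((integrable_gaussE_mul_abs_pow ht 1).const_mul (1 / (2 * t))).add
    ((integrable_gaussE_mul_abs_pow ht 3).const_mul (1 / (4 * t ^ 2)))).congr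
    (ae_of_all _ fun z => ?_)
  simp only [Pi.add_apply]
  ring

theorem integral_gaussE_mul_moments {t : ℝ} (ht : 0 < t) :
    ∫ z, gaussE z t * (|z| / (2 * t) + |z| ^ 3 / (4 * t ^ 2)) = 3 / √(π * t) := by
  have hfun : (fun z => gaussE z t * (|z| / (2 * t) + |z| ^ 3 / (4 * t ^ 2))) = fun z =>
      1 / (2 * t) * (gaussE z t * |z| ^ 1) + 1 / (4 * t ^ 2) * (gaussE z t * |z| ^ 3) := by
    funext z
    ring
  have hnorm : (4 * π * t) ^ (-(1 : ℝ) / 2) = 1 / (2 * √(π * t)) := by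
    rw [neg_div, rpow_neg (by positivity), ← sqrt_eq_rpow, mul_assoc, sqrt_mul' _ (by positivity),
      show √4 = 2 by rw [show (4 : ℝ) = 2 ^ 2 by norm_num, sqrt_sq zero_le_two], one_div]
  rw [hfun, integral_add ((integrable_gaussE_mul_abs_pow ht 1).const_mul _)
    ((integrable_gaussE_mul_abs_pow ht 3).const_mul _), integral_const_mul, integral_const_mul,
    integral_gaussE_mul_abs_pow ht, integral_gaussE_mul_abs_pow ht, hnorm]
  norm_num [Gamma_two]
  field_simp
  ring

theorem abs_integral_gaussEDeriv_mul_le {g : ℝ → ℝ} (hg : AEStronglyMeasurable g) {M : ℝ}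
    (hM : ∀ z, |g z| ≤ M) {K : ℝ} (hK : ∀ z, |g z - g 0| ≤ K * |z|) {t : ℝ} (ht : 0 < t) :
    |∫ z, gaussEDeriv z t * g z| ≤ 3 / √π * K / √t := by
  have hK₀ : 0 ≤ K := by simpa using (abs_nonneg _).trans (hK 1)
  have hcentre : ∫ z, gaussEDeriv z t * g z = ∫ z, gaussEDeriv z t * (g z - g 0) := by
    simp_rw [mul_sub]
    rw [integral_sub ((integrable_gaussEDeriv ht).mul_bdd hg (.of_forall hM))
      ((integrable_gaussEDeriv ht).mul_const _), integral_mul_const, integral_gaussEDeriv ht,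
      zero_mul, sub_zero]
  have hpointwise : ∀ z, |gaussEDeriv z t * (g z - g 0)| ≤
      K * (gaussE z t * (|z| / (2 * t) + |z| ^ 3 / (4 * t ^ 2))) := fun z =>
    calc |gaussEDeriv z t * (g z - g 0)| = |gaussEDeriv z t| * |g z - g 0| := abs_mul _ _
      _ ≤ gaussE z t * (1 / (2 * t) + z ^ 2 / (4 * t ^ 2)) * (K * |z|) :=
        mul_le_mul (abs_gaussEDeriv_le ht z) (hK z) (abs_nonneg _)
          (mul_nonneg (gaussE_pos ht z).le (by positivity))
      _ = K * (gaussE z t * (|z| / (2 * t) + |z| ^ 3 / (4 * t ^ 2))) := by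
        rw [← sq_abs z]
        ring
  calc |∫ z, gaussEDeriv z t * g z|
      ≤ ∫ z, |gaussEDeriv z t * (g z - g 0)| := hcentre ▸ abs_integral_le_integral_abs
    _ ≤ ∫ z, K * (gaussE z t * (|z| / (2 * t) + |z| ^ 3 / (4 * t ^ 2))) :=
      integral_mono_of_nonneg (ae_of_all _ fun z => abs_nonneg _)
        ((integrable_gaussE_mul_moments ht).const_mul K) (ae_of_all _ hpointwise)
    _ = 3 / √π * K / √t := by
      rw [integral_const_mul, integral_gaussE_mul_moments ht, sqrt_mul pi_pos.le]
      ring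

/-- There is a universal constant `c' > 0` such that for every
bounded Lipschitz `w₀` with Lipschitz constant `K`, the heat extension
`u(x,t) = ∫_ℝ E(x−y,t) w₀(y) dy` satisfies `|∂_t u(x,t)| ≤ c' K t^{−1/2}`. -/
theorem stmt18 :
    ∃ c' : ℝ, 0 < c' ∧
      ∀ (w₀ : ℝ → ℝ) (K : ℝ),
        (∀ x y : ℝ, |w₀ x - w₀ y| ≤ K * |x - y|) →
        (∃ M, ∀ x : ℝ, |w₀ x| ≤ M) →
        ∀ (x : ℝ), ∀ t > (0 : ℝ), ∃ D : ℝ,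
          HasDerivAt (fun s => ∫ y : ℝ, gaussE (x - y) s * w₀ y) D t ∧
          |D| ≤ c' * K / Real.sqrt t := by
  refine ⟨3 / √π, by positivity, fun w₀ K hK ⟨M, hM⟩ x t ht => ?_⟩
  have hK₀ : 0 ≤ K := by simpa using (abs_nonneg _).trans (hK 1 0)
  have hw₀ : Continuous w₀ :=
    (LipschitzWith.of_dist_le_mul (K := ⟨K, hK₀⟩) fun a b => by
      rw [dist_eq, dist_eq]
      exact hK a b).continuous
  have hreflect : (fun s => ∫ y, gaussE (x - y) s * w₀ y) =
      fun s => ∫ z, gaussE z s * w₀ (x - z) := by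
    funext s
    simpa only [sub_sub_cancel] using
      integral_sub_left_eq_self (fun z => gaussE z s * w₀ (x - z)) volume x
  have hg : AEStronglyMeasurable fun z => w₀ (x - z) :=
    (hw₀.comp (continuous_const.sub continuous_id)).aestronglyMeasurable
  rw [hreflect]
  exact ⟨_, hasDerivAt_integral_gaussE_mul hg (fun z => hM (x - z)) ht,
    abs_integral_gaussEDeriv_mul_le hg (fun z => hM (x - z))
      (fun z => by simpa [abs_sub_comm] using hK (x - z) x) ht⟩
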